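/- arXiv:1711.08382 — 2 statements merged into one kernel-verified Lean document; each statement's English description precedes it below -/
import Mathlib

section
/- Let V be a finite-dimensional real inner product space, S ∈ 𝔬(V) a skew-symmetric endomorphism, and let S act on Λ^k V as a derivation (the induced action on exterior powers). If 0 < k < dim V, the kernel of the induced action of all of 𝔬(V) on Λ^k V is trivial; equivalently, for every nonzero α ∈ Λ^k V there exists S ∈ 𝔬(V) with S·α ≠ 0. -/
open RealInnerProductSpace

section Aux

variable {V : Type*} [NormedAddCommGroup V] [InnerProductSpace ℝ V]

/-- The elementary skew-symmetric endomorphism `x ↦ ⟪u,x⟫ w - ⟪w,x⟫ u`. -/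
noncomputable def rotAux (u w : V) : V →ₗ[ℝ] V where
  toFun x := ⟪u, x⟫ • w - ⟪w, x⟫ • u
  map_add' x y := by simp [inner_add_right, add_smul]; abel
  map_smul' r x := by simp [inner_smul_right, mul_smul, smul_sub]

@[simp] lemma rotAux_apply (u w x : V) : rotAux u w x = ⟪u, x⟫ • w - ⟪w, x⟫ • u := rfl

lemma rotAux_skew (u w x y : V) : ⟪rotAux u w x, y⟫ = -⟪x, rotAux u w y⟫ := by
  simp [inner_sub_left, inner_sub_right, real_inner_smul_left, real_inner_smul_right]
  rw [real_inner_comm u x, real_inner_comm w x]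
  ring

lemma sum_rotAux_sq {n : ℕ} (b : OrthonormalBasis (Fin n) ℝ V) (x : V) :
    ∑ i : Fin n, ∑ j : Fin n, rotAux (b i) (b j) (rotAux (b i) (b j) x)
      = (2 - 2 * (n : ℝ)) • x := by
  have horth : ∀ i j : Fin n, ⟪b i, b j⟫ = if i = j then (1:ℝ) else 0 :=
    fun i j => orthonormal_iff_ite.mp b.orthonormal i j
  have hij : ∀ i j : Fin n, rotAux (b i) (b j) (rotAux (b i) (b j) x)
      = (if i = j then (1:ℝ) else 0) • (⟪b i, x⟫ • b j + ⟪b j, x⟫ • b i)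
        - ⟪b i, x⟫ • b i - ⟪b j, x⟫ • b j := by
    intro i j
    simp only [rotAux_apply, map_sub, map_smul, inner_smul_right, inner_sub_right,
      horth i j, horth j i]
    have h1 : ⟪b i, b i⟫ = (1:ℝ) := by rw [horth]; simp
    have h2 : ⟪b j, b j⟫ = (1:ℝ) := by rw [horth]; simp
    rw [h1, h2]
    by_cases h : i = j
    · subst h; simp
    · have h' : ¬ (j = i) := fun hh => h hh.symm
      simp only [h, h', if_false, zero_smul]
      module
  calc ∑ i : Fin n, ∑ j : Fin n, rotAux (b i) (b j) (rotAux (b i) (b j) x)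
      = ∑ i : Fin n, ∑ j : Fin n,
          ((if i = j then (1:ℝ) else 0) • (⟪b i, x⟫ • b j + ⟪b j, x⟫ • b i)
            - ⟪b i, x⟫ • b i - ⟪b j, x⟫ • b j) := by
        exact Finset.sum_congr rfl fun i _ => Finset.sum_congr rfl fun j _ => hij i j
    _ = (2 - 2 * (n : ℝ)) • x := by
        simp only [Finset.sum_sub_distrib, Finset.sum_ite_eq, Finset.mem_univ, if_true,
          Finset.sum_const, Finset.card_univ, Fintype.card_fin, ite_smul, one_smul, zero_smul]
        rw [b.sum_repr' x]
        simp only [Finset.sum_add_distrib, b.sum_repr' x, Finset.sum_const,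
          Finset.card_univ, Fintype.card_fin]
        rw [← Finset.smul_sum, b.sum_repr' x]
        simp only [← Nat.cast_smul_eq_nsmul ℝ]
        module

lemma sum_rot_bilin {n : ℕ} (b : OrthonormalBasis (Fin n) ℝ V) {W : Type*}
    [AddCommGroup W] [Module ℝ W] (B : V →ₗ[ℝ] V →ₗ[ℝ] W) (h0 : ∀ z, B z z = 0)
    (x y : V) :
    ∑ i : Fin n, ∑ j : Fin n, B (rotAux (b i) (b j) x) (rotAux (b i) (b j) y)
      = -(2:ℝ) • B y x := by
  have h1 : ∀ z : V, ∑ j : Fin n, ⟪b j, y⟫ • B (b j) z = B y z := by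
    intro z
    conv_rhs => rw [← b.sum_repr' y]
    simp [map_sum]
  have h2 : ∀ u : V, ∑ j : Fin n, ⟪b j, x⟫ • B u (b j) = B u x := by
    intro u
    conv_rhs => rw [← b.sum_repr' x]
    simp [map_sum]
  have hterm : ∀ i j : Fin n,
      B (rotAux (b i) (b j) x) (rotAux (b i) (b j) y)
        = -(⟪b i, x⟫ • ⟪b j, y⟫ • B (b j) (b i)) - ⟪b i, y⟫ • ⟪b j, x⟫ • B (b i) (b j) := by
    intro i j
    simp only [rotAux_apply, map_sub, map_smul, LinearMap.sub_apply, LinearMap.smul_apply,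
      h0, smul_zero]
    module
  calc ∑ i : Fin n, ∑ j : Fin n, B (rotAux (b i) (b j) x) (rotAux (b i) (b j) y)
      = ∑ i : Fin n, ∑ j : Fin n,
          (-(⟪b i, x⟫ • ⟪b j, y⟫ • B (b j) (b i)) - ⟪b i, y⟫ • ⟪b j, x⟫ • B (b i) (b j)) :=
        Finset.sum_congr rfl fun i _ => Finset.sum_congr rfl fun j _ => hterm i j
    _ = -(∑ i : Fin n, ⟪b i, x⟫ • B y (b i)) - ∑ i : Fin n, ⟪b i, y⟫ • B (b i) x := by
        simp only [Finset.sum_sub_distrib, Finset.sum_neg_distrib, ← Finset.smul_sum]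
        rw [Finset.sum_congr rfl fun i _ => by rw [h1 (b i)],
          Finset.sum_congr rfl (fun i _ => by rw [h2 (b i)] : ∀ i ∈ Finset.univ,
            ⟪b i, y⟫ • ∑ j : Fin n, ⟪b j, x⟫ • B (b i) (b j) = ⟪b i, y⟫ • B (b i) x)]
    _ = -(2:ℝ) • B y x := by
        rw [h2 y, h1 x]
        module

/-- Substituting into one slot of `ιMulti`, as a linear map. -/
noncomputable def slotL (k : ℕ) (v : Fin k → V) (a : Fin k) :
    V →ₗ[ℝ] ExteriorAlgebra ℝ V where
  toFun x := ExteriorAlgebra.ιMulti ℝ k (Function.update v a x)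
  map_add' x y := (ExteriorAlgebra.ιMulti ℝ k).map_update_add v a x y
  map_smul' r x := (ExteriorAlgebra.ιMulti ℝ k).map_update_smul v a r x

@[simp] lemma slotL_apply (k : ℕ) (v : Fin k → V) (a : Fin k) (x : V) :
    slotL k v a x = ExteriorAlgebra.ιMulti ℝ k (Function.update v a x) := rfl

/-- Substituting into two distinct slots of `ιMulti`, as a bilinear map. -/
noncomputable def slot2 (k : ℕ) (v : Fin k → V) (a c : Fin k) (hac : a ≠ c) :
    V →ₗ[ℝ] V →ₗ[ℝ] ExteriorAlgebra ℝ V where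
  toFun x := slotL k (Function.update v a x) c
  map_add' x y := by
    ext z
    simp only [slotL_apply, LinearMap.add_apply]
    simp only [Function.update_comm hac]
    exact (ExteriorAlgebra.ιMulti ℝ k).map_update_add _ a x y
  map_smul' r x := by
    ext z
    simp only [slotL_apply, LinearMap.smul_apply, RingHom.id_apply]
    simp only [Function.update_comm hac]
    exact (ExteriorAlgebra.ιMulti ℝ k).map_update_smul _ a r x

@[simp] lemma slot2_apply (k : ℕ) (v : Fin k → V) (a c : Fin k) (hac : a ≠ c) (x y : V) :
    slot2 k v a c hac x y
      = ExteriorAlgebra.ιMulti ℝ k (Function.update (Function.update v a x) c y) := rfl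

omit [NormedAddCommGroup V] [InnerProductSpace ℝ V] in
lemma update_update_swap {k : ℕ} (v : Fin k → V) {a c : Fin k} (h : a ≠ c) :
    Function.update (Function.update v a (v c)) c (v a) = v ∘ Equiv.swap a c := by
  funext i
  rcases eq_or_ne i c with rfl | hic
  · simp [Function.update_self, Equiv.swap_apply_right]
  · rcases eq_or_ne i a with rfl | hia
    · simp [Function.update_of_ne hic, Function.update_self, Equiv.swap_apply_left]
    · simp [Function.update_of_ne hic, Function.update_of_ne hia,
        Equiv.swap_apply_of_ne_of_ne hia hic]

lemma reorder3 {M : Type*} [AddCommMonoid M] {α β γ : Type*} [Fintype α] [Fintype β]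
    [Fintype γ] (f : α → β → γ → M) :
    ∑ i : α, ∑ j : β, ∑ a : γ, f i j a = ∑ a : γ, ∑ i : α, ∑ j : β, f i j a :=
  calc ∑ i : α, ∑ j : β, ∑ a : γ, f i j a
      = ∑ i : α, ∑ a : γ, ∑ j : β, f i j a :=
        Finset.sum_congr rfl fun _ _ => Finset.sum_comm
    _ = ∑ a : γ, ∑ i : α, ∑ j : β, f i j a := Finset.sum_comm

lemma reorder4 {M : Type*} [AddCommMonoid M] {α β γ : Type*} [Fintype α] [Fintype β]
    [Fintype γ] (w : γ → Finset γ) (f : α → β → γ → γ → M) :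
    ∑ i : α, ∑ j : β, ∑ a : γ, ∑ c ∈ w a, f i j a c
      = ∑ a : γ, ∑ c ∈ w a, ∑ i : α, ∑ j : β, f i j a c :=
  calc ∑ i : α, ∑ j : β, ∑ a : γ, ∑ c ∈ w a, f i j a c
      = ∑ i : α, ∑ a : γ, ∑ j : β, ∑ c ∈ w a, f i j a c :=
        Finset.sum_congr rfl fun _ _ => Finset.sum_comm
    _ = ∑ a : γ, ∑ i : α, ∑ j : β, ∑ c ∈ w a, f i j a c := Finset.sum_comm
    _ = ∑ a : γ, ∑ i : α, ∑ c ∈ w a, ∑ j : β, f i j a c :=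
        Finset.sum_congr rfl fun _ _ => Finset.sum_congr rfl fun _ _ => Finset.sum_comm
    _ = ∑ a : γ, ∑ c ∈ w a, ∑ i : α, ∑ j : β, f i j a c :=
        Finset.sum_congr rfl fun _ _ => Finset.sum_comm

/-- The Casimir identity on a single wedge: summing `D S ∘ D S` over the elementary
skew-symmetric endomorphisms yields the scalar `2 k (k - n)`. -/
lemma casimir_wedge {n k : ℕ} (hk : 0 < k) (b : OrthonormalBasis (Fin n) ℝ V)
    (D : (V →ₗ[ℝ] V) → ExteriorAlgebra ℝ V →ₗ[ℝ] ExteriorAlgebra ℝ V)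
    (hD : ∀ (S : V →ₗ[ℝ] V) (v : Fin k → V),
      D S (ExteriorAlgebra.ιMulti ℝ k v)
        = ∑ i : Fin k, ExteriorAlgebra.ιMulti ℝ k (Function.update v i (S (v i))))
    (v : Fin k → V) :
    ∑ i : Fin n, ∑ j : Fin n,
        D (rotAux (b i) (b j)) (D (rotAux (b i) (b j)) (ExteriorAlgebra.ιMulti ℝ k v))
      = ((2:ℝ) * k * ((k:ℝ) - n)) • ExteriorAlgebra.ιMulti ℝ k v := by
  classical
  have hstep : ∀ S : V →ₗ[ℝ] V, D S (D S (ExteriorAlgebra.ιMulti ℝ k v)) =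
      (∑ a : Fin k, ExteriorAlgebra.ιMulti ℝ k (Function.update v a (S (S (v a)))))
      + ∑ a : Fin k, ∑ c ∈ Finset.univ.erase a,
          ExteriorAlgebra.ιMulti ℝ k
            (Function.update (Function.update v a (S (v a))) c (S (v c))) := by
    intro S
    rw [hD, map_sum, ← Finset.sum_add_distrib]
    refine Finset.sum_congr rfl fun a _ => ?_
    rw [hD]
    rw [← Finset.add_sum_erase _ _ (Finset.mem_univ a)]
    congr 1
    · rw [Function.update_self, Function.update_idem]
    · refine Finset.sum_congr rfl fun c hc => ?_
      rw [Function.update_of_ne (Finset.ne_of_mem_erase hc)]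
  calc ∑ i : Fin n, ∑ j : Fin n,
        D (rotAux (b i) (b j)) (D (rotAux (b i) (b j)) (ExteriorAlgebra.ιMulti ℝ k v))
      = (∑ i : Fin n, ∑ j : Fin n, ∑ a : Fin k,
          slotL k v a (rotAux (b i) (b j) (rotAux (b i) (b j) (v a))))
        + ∑ i : Fin n, ∑ j : Fin n, ∑ a : Fin k, ∑ c ∈ Finset.univ.erase a,
            ExteriorAlgebra.ιMulti ℝ k
              (Function.update (Function.update v a (rotAux (b i) (b j) (v a))) c
                (rotAux (b i) (b j) (v c))) := by
        rw [← Finset.sum_add_distrib]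
        refine Finset.sum_congr rfl fun i _ => ?_
        rw [← Finset.sum_add_distrib]
        exact Finset.sum_congr rfl fun j _ => hstep _
    _ = ((2:ℝ) * k * ((k:ℝ) - n)) • ExteriorAlgebra.ιMulti ℝ k v := by
        have hdiag : (∑ i : Fin n, ∑ j : Fin n, ∑ a : Fin k,
            slotL k v a (rotAux (b i) (b j) (rotAux (b i) (b j) (v a))))
            = ((k : ℝ) * (2 - 2 * (n:ℝ))) • ExteriorAlgebra.ιMulti ℝ k v := by
          have h1 : ∀ a : Fin k, ∑ i : Fin n, ∑ j : Fin n,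
              slotL k v a (rotAux (b i) (b j) (rotAux (b i) (b j) (v a)))
              = (2 - 2 * (n:ℝ)) • ExteriorAlgebra.ιMulti ℝ k v := by
            intro a
            rw [Finset.sum_congr rfl fun i (_ : i ∈ Finset.univ) =>
                (map_sum (slotL k v a) _ _).symm,
              ← map_sum, sum_rotAux_sq b (v a), map_smul, slotL_apply,
              Function.update_eq_self]
          rw [reorder3,
            Finset.sum_congr rfl fun a (_ : a ∈ Finset.univ) => h1 a,
            Finset.sum_const, Finset.card_univ, Fintype.card_fin,
            ← Nat.cast_smul_eq_nsmul ℝ, smul_smul]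
        have hcross : (∑ i : Fin n, ∑ j : Fin n, ∑ a : Fin k, ∑ c ∈ Finset.univ.erase a,
            ExteriorAlgebra.ιMulti ℝ k
              (Function.update (Function.update v a (rotAux (b i) (b j) (v a))) c
                (rotAux (b i) (b j) (v c))))
            = ((k : ℝ) * ((k:ℝ) - 1) * 2) • ExteriorAlgebra.ιMulti ℝ k v := by
          have h2 : ∀ a : Fin k, ∀ c ∈ Finset.univ.erase a,
              ∑ i : Fin n, ∑ j : Fin n,
                ExteriorAlgebra.ιMulti ℝ k
                  (Function.update (Function.update v a (rotAux (b i) (b j) (v a))) c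
                    (rotAux (b i) (b j) (v c)))
              = (2:ℝ) • ExteriorAlgebra.ιMulti ℝ k v := by
            intro a c hc
            have hac : a ≠ c := (Finset.ne_of_mem_erase hc).symm
            have h0 : ∀ z : V, slot2 k v a c hac z z = 0 := by
              intro z
              rw [slot2_apply]
              refine AlternatingMap.map_eq_zero_of_eq _ _ (i := a) (j := c) ?_ hac
              rw [Function.update_of_ne hac, Function.update_self, Function.update_self]
            have := sum_rot_bilin b (slot2 k v a c hac) h0 (v a) (v c)
            simp only [slot2_apply] at this
            rw [this, update_update_swap v hac, AlternatingMap.map_swap _ _ hac]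
            module
          rw [reorder4]
          rw [Finset.sum_congr rfl fun a (_ : a ∈ Finset.univ) =>
            Finset.sum_congr rfl fun c hc => h2 a c hc]
          simp only [Finset.sum_const, Finset.card_erase_of_mem (Finset.mem_univ _),
            Finset.card_univ, Fintype.card_fin]
          rw [← Nat.cast_smul_eq_nsmul ℝ, ← Nat.cast_smul_eq_nsmul ℝ,
            smul_smul, smul_smul, Nat.cast_sub hk]
          congr 1
          push_cast
          ring
        rw [hdiag, hcross, ← add_smul]
        congr 1
        ring

end Aux

/-- let `V` be a finite-dimensional real inner product space and let `𝔬(V)`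
(the skew-symmetric endomorphisms) act on `Λ^k V` by derivations, i.e. by the operators
`D S` determined by `D S (v₁∧…∧v_k) = Σᵢ v₁∧…∧ S vᵢ ∧…∧ v_k`. If `0 < k < dim V`, then
the kernel of this action is trivial: for every nonzero `α ∈ Λ^k V` there exists a
skew-symmetric `S` with `D S α ≠ 0`. (Here `Λ^k V = ⋀[ℝ]^k V` is realized as a submodule
of the exterior algebra.) -/
theorem stmt8 {V : Type*} [NormedAddCommGroup V] [InnerProductSpace ℝ V]
    [FiniteDimensional ℝ V]
    (k : ℕ) (hk : 0 < k) (hk' : k < Module.finrank ℝ V)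
    (D : (V →ₗ[ℝ] V) → ExteriorAlgebra ℝ V →ₗ[ℝ] ExteriorAlgebra ℝ V)
    (hD : ∀ (S : V →ₗ[ℝ] V) (v : Fin k → V),
      D S (ExteriorAlgebra.ιMulti ℝ k v)
        = ∑ i : Fin k, ExteriorAlgebra.ιMulti ℝ k (Function.update v i (S (v i))))
    (α : ExteriorAlgebra ℝ V) (hα : α ∈ ⋀[ℝ]^k V) (hα0 : α ≠ 0) :
    ∃ S : V →ₗ[ℝ] V, (∀ x y : V, ⟪S x, y⟫ = -⟪x, S y⟫) ∧ D S α ≠ 0 := by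
  classical
  by_contra hcon
  push_neg at hcon
  set n := Module.finrank ℝ V with hn
  let b : OrthonormalBasis (Fin n) ℝ V := stdOrthonormalBasis ℝ V
  have hzero : ∀ i j : Fin n, D (rotAux (b i) (b j)) α = 0 :=
    fun i j => hcon _ (rotAux_skew (b i) (b j))
  have key0 : ∀ β ∈ Submodule.span ℝ (Set.range (ExteriorAlgebra.ιMulti ℝ k (M := V))),
      ∑ i : Fin n, ∑ j : Fin n,
        D (rotAux (b i) (b j)) (D (rotAux (b i) (b j)) β)
          = ((2:ℝ) * k * ((k:ℝ) - n)) • β := by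
    intro β hβ
    induction hβ using Submodule.span_induction with
    | mem x hx =>
      obtain ⟨v, rfl⟩ := hx
      exact casimir_wedge hk b D hD v
    | zero => simp
    | add x y _ _ hx hy =>
      simp only [map_add, Finset.sum_add_distrib, hx, hy, smul_add]
    | smul r x _ hx =>
      simp only [map_smul, ← Finset.smul_sum, hx, smul_comm r]
  have key : ∑ i : Fin n, ∑ j : Fin n,
      D (rotAux (b i) (b j)) (D (rotAux (b i) (b j)) α)
        = ((2:ℝ) * k * ((k:ℝ) - n)) • α := by
    refine key0 α ?_
    rw [ExteriorAlgebra.ιMulti_span_fixedDegree]; exact hα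
  have h0 : (0 : ExteriorAlgebra ℝ V) = ((2:ℝ) * k * ((k:ℝ) - n)) • α := by
    rw [← key]
    simp only [hzero, map_zero, Finset.sum_const_zero]
  have hc : ((2:ℝ) * k * ((k:ℝ) - n)) ≠ 0 := by
    have h1 : (k:ℝ) < n := by exact_mod_cast hk'
    have h2 : (0:ℝ) < k := by exact_mod_cast hk
    have := sub_ne_zero_of_ne (ne_of_lt h1)
    exact mul_ne_zero (mul_ne_zero two_ne_zero (ne_of_gt h2)) this
  exact hα0 ((smul_eq_zero.mp h0.symm).resolve_left hc)
end

section
/- Let V be an n-dimensional real inner product space and R: Λ²V → Λ²V a symmetric positive-definite operator with R ≥ c·Id, c > 0. Define the Weitzenböck-type operator 𝐑 on Λ^k V by 𝐑 = −Σ_{i<j} 𝐒_{ij}², where S = R^{1/2} and 𝐒_{ij} is the derivation action on Λ^k V of the 𝔬(V)-element with matrix entries ⟨S(e_i∧e_j), e_r∧e_s⟩. Then ⟨𝐑α, α⟩ = Σ_{i<j} |𝐒_{ij}(α)|² > 0 for every nonzero α ∈ Λ^k V with 0 < k < n. -/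
set_option linter.unusedSectionVars false


open RealInnerProductSpace

variable {V : Type*} [NormedAddCommGroup V] [InnerProductSpace ℝ V] [FiniteDimensional ℝ V]

/-- The decomposable wedge `e_i ∧ e_j ∈ Λ²V` of two basis vectors. -/
noncomputable def wedge2 {n : ℕ} (b : OrthonormalBasis (Fin n) ℝ V) (i j : Fin n) :
    ⋀[ℝ]^2 V :=
  ⟨ExteriorAlgebra.ιMulti ℝ 2 ![b i, b j],
    ExteriorAlgebra.ιMulti_range ℝ 2 (Set.mem_range_self _)⟩

/-- The skew-symmetric endomorphism of `V` with matrix entries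
`a_{rs} = ⟨S(e_i∧e_j), e_r∧e_s⟩`, i.e. `v ↦ Σ_{r,s} a_{rs} ⟨e_s, v⟩ e_r`. -/
noncomputable def matS {n : ℕ} (b : OrthonormalBasis (Fin n) ℝ V)
    (g2 : ⋀[ℝ]^2 V →ₗ[ℝ] ⋀[ℝ]^2 V →ₗ[ℝ] ℝ)
    (S : ⋀[ℝ]^2 V →ₗ[ℝ] ⋀[ℝ]^2 V) (i j : Fin n) : V →ₗ[ℝ] V :=
  ∑ r : Fin n, ∑ s : Fin n,
    g2 (S (wedge2 b i j)) (wedge2 b r s) • ((innerSL ℝ (b s)).toLinearMap.smulRight (b r))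

namespace Stmt9Aux

variable {n : ℕ} (b : OrthonormalBasis (Fin n) ℝ V)

noncomputable def eW (k : ℕ) (m : Fin k → Fin n) : ⋀[ℝ]^k V :=
  ⟨ExteriorAlgebra.ιMulti ℝ k (fun i => b (m i)),
    ExteriorAlgebra.ιMulti_range ℝ k (Set.mem_range_self _)⟩

lemma wedge2_eq_eW (r s : Fin n) : wedge2 b r s = eW b 2 ![r, s] := by
  apply Subtype.ext
  show ExteriorAlgebra.ιMulti ℝ 2 _ = ExteriorAlgebra.ιMulti ℝ 2 _
  congr 1
  funext i
  fin_cases i <;> rfl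

lemma wedge2_antisymm (r s : Fin n) : wedge2 b s r = - wedge2 b r s := by
  apply Subtype.ext
  show ExteriorAlgebra.ιMulti ℝ 2 ![b s, b r]
      = ((- wedge2 b r s : ⋀[ℝ]^2 V) : ExteriorAlgebra ℝ V)
  rw [show ((- wedge2 b r s : ⋀[ℝ]^2 V) : ExteriorAlgebra ℝ V)
      = -(ExteriorAlgebra.ιMulti ℝ 2 ![b r, b s]) from rfl]
  have h : ![b s, b r] = ![b r, b s] ∘ Equiv.swap (0 : Fin 2) 1 := by
    funext i
    fin_cases i <;> simp [Equiv.swap_apply_left, Equiv.swap_apply_right]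
  rw [h, AlternatingMap.map_swap _ _ (by decide : (0 : Fin 2) ≠ 1)]

lemma wedge2_self (i : Fin n) : wedge2 b i i = 0 := by
  apply Subtype.ext
  show ExteriorAlgebra.ιMulti ℝ 2 ![b i, b i] = 0
  exact AlternatingMap.map_eq_zero_of_eq _ _ (show ![b i, b i] 0 = ![b i, b i] 1 from rfl)
    (by decide : (0 : Fin 2) ≠ 1)

lemma eW_noninj {k : ℕ} {m : Fin k → Fin n} (h : ¬ Function.Injective m) : eW b k m = 0 := by
  apply Subtype.ext
  show ExteriorAlgebra.ιMulti ℝ k _ = 0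
  simp only [Function.Injective, not_forall] at h
  obtain ⟨i, j, hij, hne⟩ := h
  exact AlternatingMap.map_eq_zero_of_eq _ _ (by simp [hij]) hne

lemma eW_perm {k : ℕ} (m : Fin k → Fin n) (σ : Equiv.Perm (Fin k)) :
    eW b k (m ∘ σ) = (Equiv.Perm.sign σ : ℤ) • eW b k m := by
  apply Subtype.ext
  show ExteriorAlgebra.ιMulti ℝ k (fun i => b ((m ∘ σ) i))
      = (((Equiv.Perm.sign σ : ℤ) • eW b k m : ⋀[ℝ]^k V) : ExteriorAlgebra ℝ V)
  rw [Submodule.coe_smul_of_tower]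
  have h := AlternatingMap.map_perm (ExteriorAlgebra.ιMulti ℝ k) (fun i => b (m i)) σ
  rw [Units.smul_def] at h
  exact h

lemma eW_expand (k : ℕ) (v : Fin k → V) :
    ExteriorAlgebra.ιMulti ℝ k v
      = ∑ m : Fin k → Fin n, (∏ i, ⟪b (m i), v i⟫) •
          ExteriorAlgebra.ιMulti ℝ k (fun i => b (m i)) := by
  calc ExteriorAlgebra.ιMulti ℝ k v
      = ExteriorAlgebra.ιMulti ℝ k (fun i => ∑ t, ⟪b t, v i⟫ • b t) := by
        congr 1; funext i; rw [b.sum_repr']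
    _ = ∑ m : Fin k → Fin n, ExteriorAlgebra.ιMulti ℝ k (fun i => ⟪b (m i), v i⟫ • b (m i)) :=
        (ExteriorAlgebra.ιMulti ℝ k).toMultilinearMap.map_sum (fun i t => ⟪b t, v i⟫ • b t)
    _ = ∑ m : Fin k → Fin n, (∏ i, ⟪b (m i), v i⟫) •
          ExteriorAlgebra.ιMulti ℝ k (fun i => b (m i)) := by
        refine Finset.sum_congr rfl fun m _ => ?_
        exact (ExteriorAlgebra.ιMulti ℝ k).toMultilinearMap.map_smul_univ _ _

lemma span_eW (k : ℕ) (x : ⋀[ℝ]^k V) :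
    x ∈ Submodule.span ℝ (Set.range (eW b k)) := by
  have hA : Submodule.span ℝ (Set.range fun m : Fin k → Fin n =>
      ((eW b k m : ⋀[ℝ]^k V) : ExteriorAlgebra ℝ V))
      = Submodule.span ℝ (Set.range (ExteriorAlgebra.ιMulti ℝ k (M := V))) := by
    apply le_antisymm
    · rw [Submodule.span_le]
      rintro y ⟨m, rfl⟩
      exact Submodule.subset_span ⟨_, rfl⟩
    · rw [Submodule.span_le]
      rintro y ⟨v, rfl⟩
      rw [eW_expand b k v]
      refine Submodule.sum_mem _ fun m _ => Submodule.smul_mem _ _ ?_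
      exact Submodule.subset_span ⟨m, rfl⟩
  have h1 : (x : ExteriorAlgebra ℝ V) ∈ Submodule.span ℝ
      (Set.range fun m : Fin k → Fin n => ((eW b k m : ⋀[ℝ]^k V) : ExteriorAlgebra ℝ V)) := by
    rw [hA, ExteriorAlgebra.ιMulti_span_fixedDegree]
    exact x.2
  have h2 : (Set.range fun m : Fin k → Fin n => ((eW b k m : ⋀[ℝ]^k V) : ExteriorAlgebra ℝ V))
      = (⋀[ℝ]^k V).subtype '' (Set.range (eW b k)) := by
    rw [← Set.range_comp]; rfl
  rw [h2, ← Submodule.map_span] at h1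
  obtain ⟨y, hy, hyx⟩ := Submodule.mem_map.mp h1
  have : y = x := Subtype.ext hyx
  rwa [this] at hy

lemma span_eW_mono (k : ℕ) (x : ⋀[ℝ]^k V) :
    x ∈ Submodule.span ℝ
      (Set.range fun m : {m : Fin k → Fin n // StrictMono m} => eW b k m.1) := by
  refine Submodule.span_le.mpr ?_ (span_eW b k x)
  rintro y ⟨m, rfl⟩
  by_cases hinj : Function.Injective m
  · set σ := Tuple.sort m with hσ
    have hmono : StrictMono (m ∘ σ) :=
      (Tuple.monotone_sort m).strictMono_of_injective (hinj.comp σ.injective)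
    have hm : m = (m ∘ σ) ∘ σ.symm := by
      funext i; simp
    have hmem : eW b k (m ∘ σ) ∈ Submodule.span ℝ
        (Set.range fun m₀ : {m : Fin k → Fin n // StrictMono m} => eW b k m₀.1) :=
      Submodule.subset_span ⟨⟨m ∘ σ, hmono⟩, rfl⟩
    rw [hm, eW_perm]
    exact zsmul_mem hmem _
  · rw [eW_noninj b hinj]
    exact Submodule.zero_mem _


/-- the "dual basis"-type functional on the k-th exterior power given by a determinant -/
noncomputable def phi (k : ℕ) (p : Fin k → Fin n) : ⋀[ℝ]^k V →ₗ[ℝ] ℝ :=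
  (ExteriorAlgebra.liftAlternating (Pi.single k
    ((Matrix.detRowAlternating : (Fin k → ℝ) [⋀^Fin k]→ₗ[ℝ] ℝ).compLinearMap
      (LinearMap.pi fun j => (innerSL ℝ (b (p j)) : V →L[ℝ] ℝ).toLinearMap)))) ∘ₗ
    (⋀[ℝ]^k V).subtype

lemma phi_eW (k : ℕ) (p m : Fin k → Fin n) :
    phi b k p (eW b k m)
      = Matrix.det (Matrix.of fun i j => if p j = m i then (1:ℝ) else 0) := by
  have h1 : phi b k p (eW b k m)
      = ExteriorAlgebra.liftAlternating (Pi.single k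
          ((Matrix.detRowAlternating : (Fin k → ℝ) [⋀^Fin k]→ₗ[ℝ] ℝ).compLinearMap
            (LinearMap.pi fun j => (innerSL ℝ (b (p j)) : V →L[ℝ] ℝ).toLinearMap)))
          (ExteriorAlgebra.ιMulti ℝ k (fun i => b (m i))) := rfl
  rw [h1, ExteriorAlgebra.liftAlternating_apply_ιMulti, Pi.single_eq_same,
    AlternatingMap.compLinearMap_apply]
  show Matrix.det _ = _
  congr 1
  ext i j
  simp only [LinearMap.pi_apply, ContinuousLinearMap.coe_coe, innerSL_apply_apply, Matrix.of_apply]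
  exact orthonormal_iff_ite.mp b.orthonormal (p j) (m i)

lemma det_delta_one {k : ℕ} {p : Fin k → Fin n} (hp : Function.Injective p) :
    Matrix.det (Matrix.of fun i j => if p j = p i then (1:ℝ) else 0) = 1 := by
  have h : (Matrix.of fun i j => if p j = p i then (1:ℝ) else 0) = 1 := by
    ext i j
    simp only [Matrix.of_apply, Matrix.one_apply]
    by_cases hij : i = j
    · simp [hij]
    · rw [if_neg (fun h => hij (hp h).symm), if_neg hij]
  rw [h, Matrix.det_one]

lemma det_delta_zero {k : ℕ} {p q : Fin k → Fin n} (j : Fin k) (hj : ∀ i, p j ≠ q i) :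
    Matrix.det (Matrix.of fun i j => if p j = q i then (1:ℝ) else 0) = 0 :=
  Matrix.det_eq_zero_of_column_eq_zero j (fun i => by simp [hj i])

/-- the elementary skew-symmetric endomorphism `x ↦ ⟨e_c,x⟩e_a - ⟨e_a,x⟩e_c` -/
noncomputable def Amap (a c : Fin n) : V →ₗ[ℝ] V :=
  (innerSL ℝ (b c)).toLinearMap.smulRight (b a) - (innerSL ℝ (b a)).toLinearMap.smulRight (b c)

lemma Amap_basis (a c t : Fin n) :
    Amap b a c (b t) = (if c = t then (1:ℝ) else 0) • b a - (if a = t then (1:ℝ) else 0) • b c := by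
  simp only [Amap, LinearMap.sub_apply, LinearMap.smulRight_apply, ContinuousLinearMap.coe_coe,
    innerSL_apply_apply]
  rw [orthonormal_iff_ite.mp b.orthonormal c t, orthonormal_iff_ite.mp b.orthonormal a t]

lemma D_Amap_eW {k : ℕ} (D : (V →ₗ[ℝ] V) →ₗ[ℝ] (⋀[ℝ]^k V →ₗ[ℝ] ⋀[ℝ]^k V))
    (hD : ∀ (T : V →ₗ[ℝ] V) (v : Fin k → V),
      D T ⟨ExteriorAlgebra.ιMulti ℝ k v,
            ExteriorAlgebra.ιMulti_range ℝ k (Set.mem_range_self _)⟩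
        = ∑ i : Fin k,
            ⟨ExteriorAlgebra.ιMulti ℝ k (Function.update v i (T (v i))),
              ExteriorAlgebra.ιMulti_range ℝ k (Set.mem_range_self _)⟩)
    (a c : Fin n) (m : Fin k → Fin n) :
    D (Amap b a c) (eW b k m)
      = ∑ i : Fin k, ((if c = m i then (1:ℝ) else 0) • eW b k (Function.update m i a)
          - (if a = m i then (1:ℝ) else 0) • eW b k (Function.update m i c)) := by
  rw [show eW b k m = ⟨ExteriorAlgebra.ιMulti ℝ k (fun i => b (m i)),
    ExteriorAlgebra.ιMulti_range ℝ k (Set.mem_range_self _)⟩ from rfl, hD]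
  refine Finset.sum_congr rfl fun i _ => ?_
  apply Subtype.ext
  rw [show ((((if c = m i then (1:ℝ) else 0) • eW b k (Function.update m i a)
          - (if a = m i then (1:ℝ) else 0) • eW b k (Function.update m i c)) : ⋀[ℝ]^k V)
        : ExteriorAlgebra ℝ V)
      = (if c = m i then (1:ℝ) else 0) • (eW b k (Function.update m i a) : ExteriorAlgebra ℝ V)
        - (if a = m i then (1:ℝ) else 0) • (eW b k (Function.update m i c) : ExteriorAlgebra ℝ V)
      from rfl]
  show ExteriorAlgebra.ιMulti ℝ k (Function.update (fun i => b (m i)) i (Amap b a c (b (m i)))) = _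
  rw [Amap_basis]
  rw [AlternatingMap.map_update_sub, AlternatingMap.map_update_smul,
    AlternatingMap.map_update_smul]
  have ha : Function.update (fun i => b (m i)) i (b a) = fun j => b (Function.update m i a j) := by
    funext j
    by_cases hj : j = i
    · subst hj; simp
    · simp [Function.update_of_ne hj]
  have hc : Function.update (fun i => b (m i)) i (b c) = fun j => b (Function.update m i c j) := by
    funext j
    by_cases hj : j = i
    · subst hj; simp
    · simp [Function.update_of_ne hj]
  rw [ha, hc]
  rfl


lemma key {k : ℕ} (hk : 0 < k) (hkn : k < n)
    (D : (V →ₗ[ℝ] V) →ₗ[ℝ] (⋀[ℝ]^k V →ₗ[ℝ] ⋀[ℝ]^k V))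
    (hD : ∀ (T : V →ₗ[ℝ] V) (v : Fin k → V),
      D T ⟨ExteriorAlgebra.ιMulti ℝ k v,
            ExteriorAlgebra.ιMulti_range ℝ k (Set.mem_range_self _)⟩
        = ∑ i : Fin k,
            ⟨ExteriorAlgebra.ιMulti ℝ k (Function.update v i (T (v i))),
              ExteriorAlgebra.ιMulti_range ℝ k (Set.mem_range_self _)⟩)
    (α : ⋀[ℝ]^k V)
    (H : ∀ a c : Fin n, D (Amap b a c) α = 0) : α = 0 := by
  obtain ⟨d, hd⟩ := (Submodule.mem_span_range_iff_exists_fun ℝ).mp (span_eW_mono b k α)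
  suffices hall : ∀ m₀ : {m : Fin k → Fin n // StrictMono m}, d m₀ = 0 by
    rw [← hd]
    exact Finset.sum_eq_zero fun m _ => by rw [hall m, zero_smul]
  intro m₀
  obtain ⟨t, ht⟩ : ∃ t : Fin n, ∀ i, m₀.1 i ≠ t := by
    by_contra hcon
    push_neg at hcon
    have hsurj : Function.Surjective m₀.1 := fun t => hcon t
    have hle := Fintype.card_le_of_surjective m₀.1 hsurj
    simp only [Fintype.card_fin] at hle
    omega
  set i₀ : Fin k := ⟨0, hk⟩ with hi₀
  set u : Fin n := m₀.1 i₀ with hu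
  set m'' : Fin k → Fin n := Function.update m₀.1 i₀ t with hm''
  have hut : u ≠ t := ht i₀
  have hm₀inj : Function.Injective m₀.1 := m₀.2.injective
  have hm''inj : Function.Injective m'' := by
    intro x y hxy
    rw [hm''] at hxy
    rcases eq_or_ne x i₀ with rfl | hx <;> rcases eq_or_ne y i₀ with rfl | hy
    · rfl
    · rw [Function.update_self, Function.update_of_ne hy] at hxy
      exact absurd hxy.symm (ht y)
    · rw [Function.update_self, Function.update_of_ne hx] at hxy
      exact absurd hxy (ht x)
    · rw [Function.update_of_ne hx, Function.update_of_ne hy] at hxy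
      exact hm₀inj hxy
  have hval : ∀ m₁ : {m : Fin k → Fin n // StrictMono m},
      phi b k m'' (D (Amap b t u) (eW b k m₁.1)) = if m₁ = m₀ then (1:ℝ) else 0 := by
    intro m₁
    have hm₁inj : Function.Injective m₁.1 := m₁.2.injective
    rw [D_Amap_eW b D hD, map_sum]
    simp only [map_sub, map_smul, smul_eq_mul]
    by_cases hm : m₁ = m₀
    · subst hm
      rw [if_pos rfl]
      have hside : ∀ i ∈ Finset.univ, i ≠ i₀ →
          ((if u = m₁.1 i then (1:ℝ) else 0) * phi b k m'' (eW b k (Function.update m₁.1 i t))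
            - (if t = m₁.1 i then (1:ℝ) else 0) *
                phi b k m'' (eW b k (Function.update m₁.1 i u))) = 0 := by
        intro i _ hi
        rw [if_neg (fun h => hi (hm₀inj (hu.symm.trans h)).symm),
          if_neg (fun h => ht i h.symm)]
        ring
      rw [Finset.sum_eq_single_of_mem i₀ (Finset.mem_univ _) hside]
      rw [if_pos hu, if_neg (fun h : t = m₁.1 i₀ => hut (hu.trans h.symm ▸ rfl))]
      rw [show Function.update m₁.1 i₀ t = m'' from hm''.symm]
      rw [phi_eW, det_delta_one hm''inj]
      ring
    · rw [if_neg hm]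
      refine Finset.sum_eq_zero fun i _ => ?_
      have h1 : (if u = m₁.1 i then (1:ℝ) else 0) *
          phi b k m'' (eW b k (Function.update m₁.1 i t)) = 0 := by
        by_cases hcase : u = m₁.1 i
        · rw [if_pos hcase, one_mul]
          by_cases htr : ∃ i', m₁.1 i' = t
          · obtain ⟨i', hi'⟩ := htr
            have hne : i' ≠ i := by
              intro h; subst h; exact hut (hcase.trans hi')
            have hni : ¬ Function.Injective (Function.update m₁.1 i t) := by
              intro hinj
              have e1 : Function.update m₁.1 i t i = t := Function.update_self _ _ _
              have e2 : Function.update m₁.1 i t i' = t := by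
                rw [Function.update_of_ne hne]; exact hi'
              exact hne (hinj (e2.trans e1.symm))
            rw [eW_noninj b hni, map_zero]
          · push_neg at htr
            rw [phi_eW]
            by_cases hsub : ∀ j, ∃ i', m'' j = Function.update m₁.1 i t i'
            · exfalso
              have hsub' : ∀ j, ∃ i', m₀.1 j = m₁.1 i' := by
                intro j
                rcases eq_or_ne j i₀ with rfl | hj
                · exact ⟨i, hu.symm.trans hcase⟩
                · obtain ⟨i', hi'⟩ := hsub j
                  rw [hm'', Function.update_of_ne hj] at hi'
                  rcases eq_or_ne i' i with rfl | hii
                  · rw [Function.update_self] at hi'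
                    exact absurd hi' (ht j)
                  · rw [Function.update_of_ne hii] at hi'
                    exact ⟨i', hi'⟩
              have himg : Finset.image m₀.1 Finset.univ ⊆ Finset.image m₁.1 Finset.univ := by
                intro x hx
                obtain ⟨j, _, rfl⟩ := Finset.mem_image.mp hx
                obtain ⟨i', hi'⟩ := hsub' j
                exact Finset.mem_image.mpr ⟨i', Finset.mem_univ _, hi'.symm⟩
              have hcards : (Finset.image m₁.1 Finset.univ).card ≤
                  (Finset.image m₀.1 Finset.univ).card := by
                rw [Finset.card_image_of_injective _ hm₁inj,
                  Finset.card_image_of_injective _ hm₀inj]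
              have heq := Finset.eq_of_subset_of_card_le himg hcards
              have hr : Set.range m₁.1 = Set.range m₀.1 := by
                have hc := congrArg (fun s : Finset (Fin n) => (s : Set (Fin n))) heq
                simp only [Finset.coe_image, Finset.coe_univ, Set.image_univ] at hc
                exact hc.symm
              have hwf : WellFoundedLT (Fin k) := inferInstance
              exact hm (Subtype.ext ((StrictMono.range_inj (β := Fin k) (γ := Fin n) m₁.2 m₀.2).mp hr))
            · push_neg at hsub
              obtain ⟨j, hj⟩ := hsub
              exact det_delta_zero j hj
        · rw [if_neg hcase, zero_mul]
      have h2 : (if t = m₁.1 i then (1:ℝ) else 0) *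
          phi b k m'' (eW b k (Function.update m₁.1 i u)) = 0 := by
        by_cases hcase : t = m₁.1 i
        · rw [if_pos hcase, one_mul]
          by_cases hur : ∃ i', m₁.1 i' = u
          · obtain ⟨i', hi'⟩ := hur
            have hne : i' ≠ i := by
              intro h; subst h; exact hut (hi'.symm.trans hcase.symm)
            have hni : ¬ Function.Injective (Function.update m₁.1 i u) := by
              intro hinj
              have e1 : Function.update m₁.1 i u i = u := Function.update_self _ _ _
              have e2 : Function.update m₁.1 i u i' = u := by
                rw [Function.update_of_ne hne]; exact hi'
              exact hne (hinj (e2.trans e1.symm))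
            rw [eW_noninj b hni, map_zero]
          · push_neg at hur
            rw [phi_eW]
            refine det_delta_zero i₀ ?_
            intro i'
            have hti : m'' i₀ = t := by rw [hm'']; exact Function.update_self _ _ _
            rw [hti]
            rcases eq_or_ne i' i with rfl | hii
            · rw [Function.update_self]
              exact fun h => hut h.symm
            · rw [Function.update_of_ne hii]
              intro h
              exact hii (hm₁inj (h.symm.trans hcase))
        · rw [if_neg hcase, zero_mul]
      rw [h1, h2, sub_zero]
  have hfin := congrArg (phi b k m'') (H t u)
  rw [map_zero, ← hd, map_sum, map_sum] at hfin
  simp only [map_smul, smul_eq_mul] at hfin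
  have hsum : ∑ m₁ : {m : Fin k → Fin n // StrictMono m},
      d m₁ * (if m₁ = m₀ then (1:ℝ) else 0) = 0 :=
    (Finset.sum_congr rfl fun m₁ _ => by rw [hval m₁]).trans hfin
  simpa [mul_ite, Finset.sum_ite_eq'] using hsum

lemma span_wedge2 (x : ⋀[ℝ]^2 V) :
    x ∈ Submodule.span ℝ (Set.range fun p : Fin n × Fin n => wedge2 b p.1 p.2) := by
  refine Submodule.span_le.mpr ?_ (span_eW b 2 x)
  rintro y ⟨m, rfl⟩
  have hm : ![m 0, m 1] = m := by funext i; fin_cases i <;> rfl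
  have h2 : wedge2 b (m 0) (m 1) = eW b 2 m := by rw [wedge2_eq_eW, hm]
  exact Submodule.subset_span ⟨(m 0, m 1), h2⟩

/-- the elementary endomorphism `x ↦ ⟨e_s, x⟩ e_r` -/
noncomputable def Emap (r s : Fin n) : V →ₗ[ℝ] V :=
  (innerSL ℝ (b s)).toLinearMap.smulRight (b r)

/-- the linear map `β ↦ Σ_{r,s} ⟨β, e_r ∧ e_s⟩ E_{rs}` -/
noncomputable def Tmap (g2 : ⋀[ℝ]^2 V →ₗ[ℝ] ⋀[ℝ]^2 V →ₗ[ℝ] ℝ) :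
    ⋀[ℝ]^2 V →ₗ[ℝ] (V →ₗ[ℝ] V) :=
  ∑ r : Fin n, ∑ s : Fin n, (g2.flip (wedge2 b r s)).smulRight (Emap b r s)

lemma Tmap_apply (g2 : ⋀[ℝ]^2 V →ₗ[ℝ] ⋀[ℝ]^2 V →ₗ[ℝ] ℝ) (β : ⋀[ℝ]^2 V) :
    Tmap b g2 β = ∑ r : Fin n, ∑ s : Fin n, g2 β (wedge2 b r s) • Emap b r s := by
  simp [Tmap, LinearMap.sum_apply]

lemma matS_eq_Tmap (g2 : ⋀[ℝ]^2 V →ₗ[ℝ] ⋀[ℝ]^2 V →ₗ[ℝ] ℝ)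
    (S : ⋀[ℝ]^2 V →ₗ[ℝ] ⋀[ℝ]^2 V) (i j : Fin n) :
    matS b g2 S i j = Tmap b g2 (S (wedge2 b i j)) := by
  rw [Tmap_apply]; rfl

lemma sum_delta_Emap (x y : Fin n) :
    (∑ r : Fin n, ∑ s : Fin n,
      ((if x = r then (1:ℝ) else 0) * (if y = s then 1 else 0)) • Emap b r s) = Emap b x y := by
  have h1 : ∀ r, (∑ s : Fin n,
      ((if x = r then (1:ℝ) else 0) * (if y = s then 1 else 0)) • Emap b r s)
      = (if x = r then (1:ℝ) else 0) • Emap b r y := by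
    intro r
    rw [Finset.sum_eq_single_of_mem y (Finset.mem_univ y)]
    · rw [if_pos rfl, mul_one]
    · intro s _ hs
      rw [if_neg (show ¬ (y = s) from fun h => hs h.symm), mul_zero, zero_smul]
  rw [Finset.sum_congr rfl fun r _ => h1 r]
  rw [Finset.sum_eq_single_of_mem x (Finset.mem_univ x)]
  · rw [if_pos rfl, one_smul]
  · intro r _ hr
    rw [if_neg (show ¬ (x = r) from fun h => hr h.symm), zero_smul]

lemma Tmap_delta (g2 : ⋀[ℝ]^2 V →ₗ[ℝ] ⋀[ℝ]^2 V →ₗ[ℝ] ℝ) (a c : Fin n) (β : ⋀[ℝ]^2 V)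
    (hβ : ∀ r s, g2 β (wedge2 b r s)
      = (if a = r then (1:ℝ) else 0) * (if c = s then 1 else 0)
        - (if c = r then (1:ℝ) else 0) * (if a = s then 1 else 0)) :
    Tmap b g2 β = Amap b a c := by
  rw [Tmap_apply]
  have hterm : ∀ r s : Fin n, g2 β (wedge2 b r s) • Emap b r s
      = ((if a = r then (1:ℝ) else 0) * (if c = s then 1 else 0)) • Emap b r s
        - ((if c = r then (1:ℝ) else 0) * (if a = s then 1 else 0)) • Emap b r s := by
    intro r s
    rw [hβ r s, sub_smul]
  calc (∑ r : Fin n, ∑ s : Fin n, g2 β (wedge2 b r s) • Emap b r s)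
      = (∑ r : Fin n, ∑ s : Fin n,
          (((if a = r then (1:ℝ) else 0) * (if c = s then 1 else 0)) • Emap b r s
            - ((if c = r then (1:ℝ) else 0) * (if a = s then 1 else 0)) • Emap b r s)) :=
        Finset.sum_congr rfl fun r _ => Finset.sum_congr rfl fun s _ => hterm r s
    _ = Emap b a c - Emap b c a := by
        simp only [Finset.sum_sub_distrib]
        rw [sum_delta_Emap, sum_delta_Emap]
    _ = Amap b a c := rfl

lemma matS_skew (g2 : ⋀[ℝ]^2 V →ₗ[ℝ] ⋀[ℝ]^2 V →ₗ[ℝ] ℝ)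
    (S : ⋀[ℝ]^2 V →ₗ[ℝ] ⋀[ℝ]^2 V) (i j : Fin n) (x y : V) :
    ⟪matS b g2 S i j x, y⟫ = -⟪x, matS b g2 S i j y⟫ := by
  have hkey : ∀ z w : V, ⟪matS b g2 S i j z, w⟫
      = ∑ r : Fin n, ∑ s : Fin n,
          g2 (S (wedge2 b i j)) (wedge2 b r s) * (⟪b s, z⟫ * ⟪b r, w⟫) := by
    intro z w
    simp only [matS, LinearMap.sum_apply, LinearMap.smul_apply, LinearMap.smulRight_apply,
      ContinuousLinearMap.coe_coe, innerSL_apply_apply, sum_inner, real_inner_smul_left]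
  rw [show (⟪x, matS b g2 S i j y⟫ : ℝ) = ⟪matS b g2 S i j y, x⟫ from real_inner_comm _ _,
    hkey, hkey, Finset.sum_comm, ← Finset.sum_neg_distrib]
  refine Finset.sum_congr rfl fun r _ => ?_
  rw [← Finset.sum_neg_distrib]
  refine Finset.sum_congr rfl fun s _ => ?_
  have ha : g2 (S (wedge2 b i j)) (wedge2 b s r)
      = - g2 (S (wedge2 b i j)) (wedge2 b r s) := by
    rw [wedge2_antisymm b r s, map_neg]
  rw [ha]
  ring

lemma matS_diag (g2 : ⋀[ℝ]^2 V →ₗ[ℝ] ⋀[ℝ]^2 V →ₗ[ℝ] ℝ)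
    (S : ⋀[ℝ]^2 V →ₗ[ℝ] ⋀[ℝ]^2 V) (i : Fin n) :
    matS b g2 S i i = 0 := by
  simp [matS, wedge2_self b i]

lemma matS_swap (g2 : ⋀[ℝ]^2 V →ₗ[ℝ] ⋀[ℝ]^2 V →ₗ[ℝ] ℝ)
    (S : ⋀[ℝ]^2 V →ₗ[ℝ] ⋀[ℝ]^2 V) (i j : Fin n) :
    matS b g2 S j i = - matS b g2 S i j := by
  simp only [matS, wedge2_antisymm b i j, map_neg, LinearMap.neg_apply, neg_smul,
    Finset.sum_neg_distrib]

end Stmt9Aux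

set_option maxHeartbeats 1000000 in
/-- let `V` be an `n`-dimensional real inner product space with orthonormal
basis `e = b`, `g2` and `gk` the (induced) inner products on `Λ²V` and `Λ^k V`,
`R : Λ²V → Λ²V` symmetric with `R ≥ c·Id` (`c > 0`), `S = R^{1/2}` its positive square
root, and `D` the derivation action of endomorphisms of `V` on `Λ^k V` (so that `𝐒_{ij}
= D(matS i j)` is the derivation action of the skew endomorphism with matrix entries
`⟨S(e_i∧e_j), e_r∧e_s⟩`). Then the Weitzenböck-type operator `𝐑 = −Σ_{i<j} 𝐒_{ij}²`
satisfies `⟨𝐑 α, α⟩ = Σ_{i<j} |𝐒_{ij} α|² > 0` for every nonzero `α ∈ Λ^k V` with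
`0 < k < n`. -/
theorem stmt9 {n : ℕ} (b : OrthonormalBasis (Fin n) ℝ V) (k : ℕ)
    (hk : 0 < k) (hkn : k < n)
    (g2 : ⋀[ℝ]^2 V →ₗ[ℝ] ⋀[ℝ]^2 V →ₗ[ℝ] ℝ)
    (gk : ⋀[ℝ]^k V →ₗ[ℝ] ⋀[ℝ]^k V →ₗ[ℝ] ℝ)
    (hg2symm : ∀ ξ η, g2 ξ η = g2 η ξ)
    (hg2pos : ∀ ξ, ξ ≠ 0 → 0 < g2 ξ ξ)
    (hgksymm : ∀ ξ η, gk ξ η = gk η ξ)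
    (hgkpos : ∀ ξ, ξ ≠ 0 → 0 < gk ξ ξ)
    (R S : ⋀[ℝ]^2 V →ₗ[ℝ] ⋀[ℝ]^2 V) (c : ℝ) (hc : 0 < c)
    (hR : ∀ β, c * g2 β β ≤ g2 (R β) β)
    (hSsymm : ∀ ξ η, g2 (S ξ) η = g2 ξ (S η))
    (hS2 : S ∘ₗ S = R)
    (D : (V →ₗ[ℝ] V) →ₗ[ℝ] (⋀[ℝ]^k V →ₗ[ℝ] ⋀[ℝ]^k V))
    (hD : ∀ (T : V →ₗ[ℝ] V) (v : Fin k → V),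
      D T ⟨ExteriorAlgebra.ιMulti ℝ k v,
            ExteriorAlgebra.ιMulti_range ℝ k (Set.mem_range_self _)⟩
        = ∑ i : Fin k,
            ⟨ExteriorAlgebra.ιMulti ℝ k (Function.update v i (T (v i))),
              ExteriorAlgebra.ιMulti_range ℝ k (Set.mem_range_self _)⟩)
    (hDskew : ∀ T : V →ₗ[ℝ] V, (∀ x y : V, ⟪T x, y⟫ = -⟪x, T y⟫) →
      ∀ ξ η, gk (D T ξ) η = - gk ξ (D T η))
    (α : ⋀[ℝ]^k V) (hα : α ≠ 0) :
    gk ((- ∑ p ∈ Finset.univ.filter (fun p : Fin n × Fin n => p.1 < p.2),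
          (D (matS b g2 S p.1 p.2)) ∘ₗ (D (matS b g2 S p.1 p.2))) α) α
      = (∑ p ∈ Finset.univ.filter (fun p : Fin n × Fin n => p.1 < p.2),
          gk (D (matS b g2 S p.1 p.2) α) (D (matS b g2 S p.1 p.2) α))
      ∧ 0 < ∑ p ∈ Finset.univ.filter (fun p : Fin n × Fin n => p.1 < p.2),
          gk (D (matS b g2 S p.1 p.2) α) (D (matS b g2 S p.1 p.2) α) := by
  classical
  have hskewD : ∀ p : Fin n × Fin n, ∀ ξ η, gk (D (matS b g2 S p.1 p.2) ξ) η
      = - gk ξ (D (matS b g2 S p.1 p.2) η) :=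
    fun p => hDskew _ (fun x y => Stmt9Aux.matS_skew b g2 S p.1 p.2 x y)
  have part1 : gk ((- ∑ p ∈ Finset.univ.filter (fun p : Fin n × Fin n => p.1 < p.2),
        (D (matS b g2 S p.1 p.2)) ∘ₗ (D (matS b g2 S p.1 p.2))) α) α
      = ∑ p ∈ Finset.univ.filter (fun p : Fin n × Fin n => p.1 < p.2),
        gk (D (matS b g2 S p.1 p.2) α) (D (matS b g2 S p.1 p.2) α) := by
    rw [LinearMap.neg_apply, LinearMap.sum_apply, map_neg, LinearMap.neg_apply, map_sum,
      LinearMap.sum_apply, ← Finset.sum_neg_distrib]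
    refine Finset.sum_congr rfl fun p _ => ?_
    rw [LinearMap.comp_apply, hskewD p (D (matS b g2 S p.1 p.2) α) α, neg_neg]
  refine ⟨part1, ?_⟩
  have hnn : ∀ ξ : ⋀[ℝ]^k V, 0 ≤ gk ξ ξ := fun ξ => by
    rcases eq_or_ne ξ 0 with rfl | h
    · simp
    · exact le_of_lt (hgkpos ξ h)
  by_contra hpos
  push_neg at hpos
  have hsum0 : ∑ p ∈ Finset.univ.filter (fun p : Fin n × Fin n => p.1 < p.2),
      gk (D (matS b g2 S p.1 p.2) α) (D (matS b g2 S p.1 p.2) α) = 0 :=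
    le_antisymm hpos (Finset.sum_nonneg fun p _ => hnn _)
  have hzero := (Finset.sum_eq_zero_iff_of_nonneg (fun p _ => hnn _)).mp hsum0
  have hDzero : ∀ p ∈ Finset.univ.filter (fun p : Fin n × Fin n => p.1 < p.2),
      D (matS b g2 S p.1 p.2) α = 0 := by
    intro p hp
    by_contra h
    exact (hgkpos _ h).ne' (hzero p hp)
  have hDall : ∀ i j : Fin n, D (matS b g2 S i j) α = 0 := by
    intro i j
    rcases lt_trichotomy i j with h | rfl | h
    · exact hDzero (i, j) (Finset.mem_filter.mpr ⟨Finset.mem_univ _, h⟩)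
    · rw [Stmt9Aux.matS_diag]
      simp
    · rw [show matS b g2 S i j = - matS b g2 S j i from Stmt9Aux.matS_swap b g2 S j i, map_neg,
        LinearMap.neg_apply,
        hDzero (j, i) (Finset.mem_filter.mpr ⟨Finset.mem_univ _, h⟩), neg_zero]
  haveI hFD : FiniteDimensional ℝ ↥(⋀[ℝ]^2 V) := by
    have hspan : (⊤ : Submodule ℝ ↥(⋀[ℝ]^2 V))
        = Submodule.span ℝ (Set.range (Stmt9Aux.eW b 2)) := by
      apply le_antisymm
      · intro x _
        exact Stmt9Aux.span_eW b 2 x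
      · exact le_top
    exact ⟨by rw [hspan]; exact Submodule.fg_span (Set.finite_range _)⟩
  have hker : ∀ ζ : ⋀[ℝ]^2 V, S ζ = 0 → ζ = 0 := by
    intro ζ hζ
    by_contra h0
    have hR0 : R ζ = 0 := by rw [← hS2, LinearMap.comp_apply, hζ, map_zero]
    have h1 := hR ζ
    rw [hR0, map_zero] at h1
    simp only [LinearMap.zero_apply] at h1
    nlinarith [hg2pos ζ h0]
  have hSinj : Function.Injective S := by
    intro ξ η h
    have h2 : S (ξ - η) = 0 := by rw [map_sub, h, sub_self]
    exact sub_eq_zero.mp (hker _ h2)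
  have hSsurj := LinearMap.injective_iff_surjective.mp hSinj
  have hg2inj : Function.Injective g2 := by
    intro ξ η h
    by_contra hne
    have hdne : ξ - η ≠ 0 := sub_ne_zero.mpr hne
    have hp := hg2pos _ hdne
    have h00 : g2 (ξ - η) = 0 := by rw [map_sub, h, sub_self]
    rw [h00] at hp
    simp only [LinearMap.zero_apply] at hp
    exact lt_irrefl 0 hp
  have hg2surj : Function.Surjective g2 := by
    have hfr : Module.finrank ℝ ↥(⋀[ℝ]^2 V) = Module.finrank ℝ (↥(⋀[ℝ]^2 V) →ₗ[ℝ] ℝ) :=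
      (Subspace.dual_finrank_eq (K := ℝ) (V := ↥(⋀[ℝ]^2 V))).symm
    exact (LinearMap.injective_iff_surjective_of_finrank_eq_finrank hfr).mp hg2inj
  have H : ∀ a c' : Fin n, D (Stmt9Aux.Amap b a c') α = 0 := by
    intro a c'
    obtain ⟨β, hβ⟩ := hg2surj (Stmt9Aux.phi b 2 ![a, c'])
    have hβval : ∀ r s : Fin n, g2 β (wedge2 b r s)
        = (if a = r then (1:ℝ) else 0) * (if c' = s then 1 else 0)
          - (if c' = r then (1:ℝ) else 0) * (if a = s then 1 else 0) := by
      intro r s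
      rw [hβ, Stmt9Aux.wedge2_eq_eW, Stmt9Aux.phi_eW, Matrix.det_fin_two]
      simp [Matrix.of_apply]
      split_ifs <;> simp [*]
    obtain ⟨γ, hγ⟩ := hSsurj β
    obtain ⟨t', ht'⟩ := (Submodule.mem_span_range_iff_exists_fun ℝ).mp (Stmt9Aux.span_wedge2 b γ)
    have hT : Stmt9Aux.Amap b a c' = ∑ p : Fin n × Fin n, t' p • matS b g2 S p.1 p.2 := by
      rw [← Stmt9Aux.Tmap_delta b g2 a c' β hβval, ← hγ, ← ht', map_sum, map_sum]
      refine Finset.sum_congr rfl fun p _ => ?_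
      rw [map_smul, map_smul, Stmt9Aux.matS_eq_Tmap]
    rw [hT, map_sum, LinearMap.sum_apply]
    refine Finset.sum_eq_zero fun p _ => ?_
    rw [map_smul, LinearMap.smul_apply, hDall p.1 p.2, smul_zero]
  exact hα (Stmt9Aux.key b hk hkn D hD α H)
end
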